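/- arXiv:2506.10667 — 6 statements merged into one kernel-verified Lean document; each statement's English description precedes it below -/
import Mathlib

section
/- For Edwards' form h_7 = [−10,1,4,7,2,5,80/7,−5,−50,−215,−100,−625,−10150] (in the notation h = [α_0,…,α_12] meaning h(u,v) = Σ_{i=0}^{12} C(12,i) α_i u^i v^{12−i}), for any coprime 2-adic integers u, v, either −h_7(u,v) has 2-adic valuation 1 (hence is not a fifth power in Z_2), or the corresponding values f_7(u,v), g_7(u,v), h_7(u,v) are all even. -/
open MvPolynomial

/-- Edwards' form `h₇ = [−10,1,4,7,2,5,80/7,−5,−50,−215,−100,−625,−10150]`,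
in the notation `h = [α₀,…,α₁₂]` meaning `h(u,v) = Σ_{i=0}^{12} C(12,i) αᵢ uⁱ v^{12−i}`.
Here `X 0` plays the role of `u` and `X 1` the role of `v`. -/
noncomputable def edwardsAlpha7 : Fin 13 → ℚ :=
  ![-10, 1, 4, 7, 2, 5, 80/7, -5, -50, -215, -100, -625, -10150]

noncomputable def edwardsH7 : MvPolynomial (Fin 2) ℚ :=
  ∑ i : Fin 13,
    C ((Nat.choose 12 i : ℚ) * edwardsAlpha7 i) * X 0 ^ (i : ℕ) * X 1 ^ (12 - (i : ℕ))

/-- `g = (1/132²)(h_uu h_vv − h_uv²)`. -/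
noncomputable def edwardsG7 : MvPolynomial (Fin 2) ℚ :=
  (1 / 132 ^ 2 : ℚ) •
    (pderiv 0 (pderiv 0 edwardsH7) * pderiv 1 (pderiv 1 edwardsH7)
      - pderiv 0 (pderiv 1 edwardsH7) * pderiv 0 (pderiv 1 edwardsH7))

/-- `f = (1/240)(h_u g_v − h_v g_u)`. -/
noncomputable def edwardsF7 : MvPolynomial (Fin 2) ℚ :=
  (1 / 240 : ℚ) •
    (pderiv 0 edwardsH7 * pderiv 1 edwardsG7 - pderiv 1 edwardsH7 * pderiv 0 edwardsG7)


set_option maxHeartbeats 4000000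

namespace Edwards7Aux

theorem pderiv_ofNat {i : Fin 2} (n : ℕ) [n.AtLeastTwo] :
    pderiv i (no_index (OfNat.ofNat n) : MvPolynomial (Fin 2) ℚ) = 0 := by
  rw [← map_ofNat (C : ℚ →+* MvPolynomial (Fin 2) ℚ) n]; exact pderiv_C

theorem pderiv_natCast {i : Fin 2} (n : ℕ) :
    pderiv i ((n : MvPolynomial (Fin 2) ℚ)) = 0 := by
  simpa only [map_natCast] using pderiv_C (i := i) (a := (n : ℚ))

theorem coe_ofNat (n : ℕ) [n.AtLeastTwo] :
    ((no_index (OfNat.ofNat n) : ℤ_[2]) : ℚ_[2]) = OfNat.ofNat n := by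
  norm_cast

theorem pX10 : pderiv 1 (X 0 : MvPolynomial (Fin 2) ℚ) = 0 :=
  pderiv_X_of_ne (by decide)

theorem pX01 : pderiv 0 (X 1 : MvPolynomial (Fin 2) ℚ) = 0 :=
  pderiv_X_of_ne (by decide)

theorem hExp : edwardsH7 = (-10) * X 1 ^ 12 + 12 * X 0 * X 1 ^ 11 + 264 * X 0 ^ 2 * X 1 ^ 10 + 1540 * X 0 ^ 3 * X 1 ^ 9 + 990 * X 0 ^ 4 * X 1 ^ 8 + 3960 * X 0 ^ 5 * X 1 ^ 7 + 10560 * X 0 ^ 6 * X 1 ^ 6 + (-3960) * X 0 ^ 7 * X 1 ^ 5 + (-24750) * X 0 ^ 8 * X 1 ^ 4 + (-47300) * X 0 ^ 9 * X 1 ^ 3 + (-6600) * X 0 ^ 10 * X 1 ^ 2 + (-7500) * X 0 ^ 11 * X 1 + (-10150) * X 0 ^ 12 := by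
  rw [edwardsH7]
  simp only [Fin.sum_univ_succ, edwardsAlpha7]
  simp only [Matrix.cons_val_succ, Matrix.cons_val_zero]
  norm_num [Nat.choose]
  simp only [map_ofNat]
  ring

theorem l0 : pderiv 0 edwardsH7 = 12 * X 1 ^ 11 + 528 * X 0 * X 1 ^ 10 + 4620 * X 0 ^ 2 * X 1 ^ 9 + 3960 * X 0 ^ 3 * X 1 ^ 8 + 19800 * X 0 ^ 4 * X 1 ^ 7 + 63360 * X 0 ^ 5 * X 1 ^ 6 + (-27720) * X 0 ^ 6 * X 1 ^ 5 + (-198000) * X 0 ^ 7 * X 1 ^ 4 + (-425700) * X 0 ^ 8 * X 1 ^ 3 + (-66000) * X 0 ^ 9 * X 1 ^ 2 + (-82500) * X 0 ^ 10 * X 1 + (-121800) * X 0 ^ 11 := by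
  rw [hExp]
  simp only [map_add, map_neg, pderiv_mul, pderiv_pow, pderiv_X_self, pX01, pX10,
    pderiv_ofNat, pderiv_one]
  ring

theorem l1 : pderiv 1 edwardsH7 = (-120) * X 1 ^ 11 + 132 * X 0 * X 1 ^ 10 + 2640 * X 0 ^ 2 * X 1 ^ 9 + 13860 * X 0 ^ 3 * X 1 ^ 8 + 7920 * X 0 ^ 4 * X 1 ^ 7 + 27720 * X 0 ^ 5 * X 1 ^ 6 + 63360 * X 0 ^ 6 * X 1 ^ 5 + (-19800) * X 0 ^ 7 * X 1 ^ 4 + (-99000) * X 0 ^ 8 * X 1 ^ 3 + (-141900) * X 0 ^ 9 * X 1 ^ 2 + (-13200) * X 0 ^ 10 * X 1 + (-7500) * X 0 ^ 11 := by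
  rw [hExp]
  simp only [map_add, map_neg, pderiv_mul, pderiv_pow, pderiv_X_self, pX01, pX10,
    pderiv_ofNat, pderiv_one]
  ring

theorem l00 : pderiv 0 (pderiv 0 edwardsH7) = 528 * X 1 ^ 10 + 9240 * X 0 * X 1 ^ 9 + 11880 * X 0 ^ 2 * X 1 ^ 8 + 79200 * X 0 ^ 3 * X 1 ^ 7 + 316800 * X 0 ^ 4 * X 1 ^ 6 + (-166320) * X 0 ^ 5 * X 1 ^ 5 + (-1386000) * X 0 ^ 6 * X 1 ^ 4 + (-3405600) * X 0 ^ 7 * X 1 ^ 3 + (-594000) * X 0 ^ 8 * X 1 ^ 2 + (-825000) * X 0 ^ 9 * X 1 + (-1339800) * X 0 ^ 10 := by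
  rw [l0]
  simp only [map_add, map_neg, pderiv_mul, pderiv_pow, pderiv_X_self, pX01, pX10,
    pderiv_ofNat, pderiv_one]
  ring

theorem l01 : pderiv 0 (pderiv 1 edwardsH7) = 132 * X 1 ^ 10 + 5280 * X 0 * X 1 ^ 9 + 41580 * X 0 ^ 2 * X 1 ^ 8 + 31680 * X 0 ^ 3 * X 1 ^ 7 + 138600 * X 0 ^ 4 * X 1 ^ 6 + 380160 * X 0 ^ 5 * X 1 ^ 5 + (-138600) * X 0 ^ 6 * X 1 ^ 4 + (-792000) * X 0 ^ 7 * X 1 ^ 3 + (-1277100) * X 0 ^ 8 * X 1 ^ 2 + (-132000) * X 0 ^ 9 * X 1 + (-82500) * X 0 ^ 10 := by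
  rw [l1]
  simp only [map_add, map_neg, pderiv_mul, pderiv_pow, pderiv_X_self, pX01, pX10,
    pderiv_ofNat, pderiv_one]
  ring

theorem l11 : pderiv 1 (pderiv 1 edwardsH7) = (-1320) * X 1 ^ 10 + 1320 * X 0 * X 1 ^ 9 + 23760 * X 0 ^ 2 * X 1 ^ 8 + 110880 * X 0 ^ 3 * X 1 ^ 7 + 55440 * X 0 ^ 4 * X 1 ^ 6 + 166320 * X 0 ^ 5 * X 1 ^ 5 + 316800 * X 0 ^ 6 * X 1 ^ 4 + (-79200) * X 0 ^ 7 * X 1 ^ 3 + (-297000) * X 0 ^ 8 * X 1 ^ 2 + (-283800) * X 0 ^ 9 * X 1 + (-13200) * X 0 ^ 10 := by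
  rw [l1]
  simp only [map_add, map_neg, pderiv_mul, pderiv_pow, pderiv_X_self, pX01, pX10,
    pderiv_ofNat, pderiv_one]
  ring

def valH {R : Type*} [CommRing R] (x y : R) : R := (-10) * y ^ 12 + 12 * x * y ^ 11 + 264 * x ^ 2 * y ^ 10 + 1540 * x ^ 3 * y ^ 9 + 990 * x ^ 4 * y ^ 8 + 3960 * x ^ 5 * y ^ 7 + 10560 * x ^ 6 * y ^ 6 + (-3960) * x ^ 7 * y ^ 5 + (-24750) * x ^ 8 * y ^ 4 + (-47300) * x ^ 9 * y ^ 3 + (-6600) * x ^ 10 * y ^ 2 + (-7500) * x ^ 11 * y + (-10150) * x ^ 12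
def valG {R : Type*} [CommRing R] (x y : R) : R := (-41) * y ^ 20 + (-740) * x * y ^ 19 + (-1710) * x ^ 2 * y ^ 18 + (-14820) * x ^ 3 * y ^ 17 + (-61845) * x ^ 4 * y ^ 16 + 13680 * x ^ 5 * y ^ 15 + 216600 * x ^ 6 * y ^ 14 + 250800 * x ^ 7 * y ^ 13 + (-2556450) * x ^ 8 * y ^ 12 + (-10719800) * x ^ 9 * y ^ 11 + (-20426900) * x ^ 10 * y ^ 10 + (-11115000) * x ^ 11 * y ^ 9 + (-17969250) * x ^ 12 * y ^ 8 + (-29298000) * x ^ 13 * y ^ 7 + (-30609000) * x ^ 14 * y ^ 6 + (-58938000) * x ^ 15 * y ^ 5 + (-60883125) * x ^ 16 * y ^ 4 + 5557500 * x ^ 17 * y ^ 3 + 23631250 * x ^ 18 * y ^ 2 + 21197500 * x ^ 19 * y + 624375 * x ^ 20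
def valF {R : Type*} [CommRing R] (x y : R) : R := (-411) * y ^ 30 + (-3810) * x * y ^ 29 + (-60465) * x ^ 2 * y ^ 28 + (-383380) * x ^ 3 * y ^ 27 + (-614655) * x ^ 4 * y ^ 26 + (-2801574) * x ^ 5 * y ^ 25 + (-13004325) * x ^ 6 * y ^ 24 + (-47449800) * x ^ 7 * y ^ 23 + (-158028975) * x ^ 8 * y ^ 22 + (-41720850) * x ^ 9 * y ^ 21 + 1905502275 * x ^ 10 * y ^ 20 + 6876436500 * x ^ 11 * y ^ 19 + 11686090125 * x ^ 12 * y ^ 18 + 7100048250 * x ^ 13 * y ^ 17 + 12360927375 * x ^ 14 * y ^ 16 + 50413194000 * x ^ 15 * y ^ 15 + 163600509375 * x ^ 16 * y ^ 14 + 355430126250 * x ^ 17 * y ^ 13 + 463427848125 * x ^ 18 * y ^ 12 + 385737772500 * x ^ 19 * y ^ 11 + 487027141875 * x ^ 20 * y ^ 10 + 383429118750 * x ^ 21 * y ^ 9 + (-51944709375) * x ^ 22 * y ^ 8 + (-181558125000) * x ^ 23 * y ^ 7 + (-5074003125) * x ^ 24 * y ^ 6 + 370510706250 * x ^ 25 *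 y ^ 5 + 520780640625 * x ^ 26 * y ^ 4 + 336891187500 * x ^ 27 * y ^ 3 + 12290109375 * x ^ 28 * y ^ 2 + (-17999531250) * x ^ 29 * y + (-10367496875) * x ^ 30

theorem aevalH (x y : ℚ_[2]) : aeval ![x, y] edwardsH7 = valH x y := by
  rw [hExp, valH]
  simp only [map_add, map_neg, map_mul, map_pow, map_ofNat, aeval_X,
    Matrix.cons_val_zero, Matrix.cons_val_one, Matrix.head_cons]

theorem aevalG (x y : ℚ_[2]) : aeval ![x, y] edwardsG7 = valG x y := by
  rw [edwardsG7, l00, l01, l11, smul_eq_C_mul, valG]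
  simp only [map_add, map_neg, map_mul, map_pow, map_ofNat, aeval_X, aeval_C, map_sub,
    Matrix.cons_val_zero, Matrix.cons_val_one, Matrix.head_cons, eq_ratCast]
  push_cast
  ring

theorem aevalF (x y : ℚ_[2]) : aeval ![x, y] edwardsF7 = valF x y := by
  rw [edwardsF7, edwardsG7, smul_eq_C_mul, smul_eq_C_mul, l00, l01, l11, l0, l1, valF]
  simp only [pderiv_C_mul, map_sub, pderiv_mul, map_add, map_neg, pderiv_pow,
    pderiv_X_self, pX01, pX10, pderiv_ofNat, pderiv_natCast, pderiv_one, pderiv_C]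
  simp only [map_add, map_neg, map_mul, map_pow, map_ofNat, map_natCast, aeval_X, aeval_C,
    map_sub, map_one, map_zero, mul_zero, zero_mul, add_zero, zero_add, Nat.cast_ofNat,
    Matrix.cons_val_zero, Matrix.cons_val_one, Matrix.head_cons, eq_ratCast]
  push_cast
  ring

theorem castH (u v : ℤ_[2]) : ((valH u v : ℤ_[2]) : ℚ_[2]) = valH (u : ℚ_[2]) (v : ℚ_[2]) := by
  simp only [valH, PadicInt.coe_add, PadicInt.coe_mul, PadicInt.coe_pow, PadicInt.coe_neg,
    PadicInt.coe_one, coe_ofNat]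

theorem castG (u v : ℤ_[2]) : ((valG u v : ℤ_[2]) : ℚ_[2]) = valG (u : ℚ_[2]) (v : ℚ_[2]) := by
  simp only [valG, PadicInt.coe_add, PadicInt.coe_mul, PadicInt.coe_pow, PadicInt.coe_neg,
    PadicInt.coe_one, coe_ofNat]

theorem castF (u v : ℤ_[2]) : ((valF u v : ℤ_[2]) : ℚ_[2]) = valF (u : ℚ_[2]) (v : ℚ_[2]) := by
  simp only [valF, PadicInt.coe_add, PadicInt.coe_mul, PadicInt.coe_pow, PadicInt.coe_neg,
    PadicInt.coe_one, coe_ofNat]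

theorem mapValH {R S : Type*} [CommRing R] [CommRing S] (φ : R →+* S) (x y : R) :
    φ (valH x y) = valH (φ x) (φ y) := by
  simp only [valH, map_add, map_neg, map_mul, map_pow, map_ofNat, map_one]

theorem mapValG {R S : Type*} [CommRing R] [CommRing S] (φ : R →+* S) (x y : R) :
    φ (valG x y) = valG (φ x) (φ y) := by
  simp only [valG, map_add, map_neg, map_mul, map_pow, map_ofNat, map_one]

theorem mapValF {R S : Type*} [CommRing R] [CommRing S] (φ : R →+* S) (x y : R) :
    φ (valF x y) = valF (φ x) (φ y) := by
  simp only [valF, map_add, map_neg, map_mul, map_pow, map_ofNat, map_one]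

theorem norm_two : ‖(2 : ℤ_[2])‖ = 2⁻¹ := by
  have h := @PadicInt.norm_p 2 ⟨Nat.prime_two⟩
  have h2 : ((2 : ℕ) : ℤ_[2]) = 2 := by norm_num
  rw [h2] at h
  rw [h]
  norm_num

theorem dvd_of_toZMod_eq_zero {z : ℤ_[2]} (hz : PadicInt.toZMod z = 0) : (2 : ℤ_[2]) ∣ z := by
  have hker : z ∈ RingHom.ker (PadicInt.toZMod : ℤ_[2] →+* ZMod 2) := hz
  rw [PadicInt.ker_toZMod, PadicInt.maximalIdeal_eq_span_p, Ideal.mem_span_singleton] at hker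
  exact_mod_cast hker

theorem parity (x : ℤ_[2]) : (∃ y, x = 2 * y) ∨ (∃ y, x = 1 + 2 * y) := by
  rcases (by decide : ∀ r : ZMod 2, r = 0 ∨ r = 1) (PadicInt.toZMod x) with hc | hc
  · obtain ⟨y, hy⟩ := dvd_of_toZMod_eq_zero hc
    exact Or.inl ⟨y, hy⟩
  · have : PadicInt.toZMod (x - 1) = 0 := by rw [map_sub, map_one, hc, sub_self]
    obtain ⟨y, hy⟩ := dvd_of_toZMod_eq_zero this
    exact Or.inr ⟨y, by linear_combination hy⟩

/-- The mod 4 reduction. -/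
noncomputable def phi4 : ℤ_[2] →+* ZMod 4 := PadicInt.toZModPow 2

theorem dvd_of_phi4_eq_zero {z : ℤ_[2]} (hz : phi4 z = 0) : (4 : ℤ_[2]) ∣ z := by
  have hker : z ∈ RingHom.ker (PadicInt.toZModPow (p := 2) 2) := hz
  rw [PadicInt.ker_toZModPow, Ideal.mem_span_singleton] at hker
  have : ((2 : ℕ) : ℤ_[2]) ^ 2 = 4 := by norm_num
  rwa [this] at hker

theorem phi4_two_mul (a : ℤ_[2]) : phi4 (2 * a) = 2 * phi4 a := by
  rw [map_mul, map_ofNat]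

theorem phi4_odd (a : ℤ_[2]) : phi4 (1 + 2 * a) = 1 + 2 * phi4 a := by
  rw [map_add, map_one, phi4_two_mul]

theorem toZMod_odd (a : ℤ_[2]) : PadicInt.toZMod (1 + 2 * a) = 1 := by
  rw [map_add, map_one, map_mul, map_ofNat,
    show ((2 : ZMod 2)) = 0 by decide, zero_mul, add_zero]

theorem unit_of_odd (w : ℤ_[2]) : ‖1 + 2 * w‖ = 1 := by
  refine le_antisymm (PadicInt.norm_le_one _) ?_
  by_contra hlt
  push_neg at hlt
  have h2 : (2 : ℤ_[2]) ∣ (1 + 2 * w) := by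
    have := (PadicInt.norm_lt_one_iff_dvd (1 + 2 * w)).mp (by simpa using hlt)
    exact_mod_cast this
  obtain ⟨c, hc⟩ := h2
  have h1 : (1 : ℤ_[2]) = 2 * (c - w) := by linear_combination hc
  have hn := norm_one (α := ℤ_[2])
  rw [h1, norm_mul, norm_two] at hn
  have hle := PadicInt.norm_le_one (c - w)
  nlinarith [norm_nonneg (c - w)]

theorem norm_unit_val (w : ℤ_[2]) : ‖(2 * (1 + 2 * w) : ℤ_[2])‖ = 2⁻¹ := by
  rw [norm_mul, norm_two, unit_of_odd, mul_one]

theorem norm_even_le (y : ℤ_[2]) : ‖(2 * y : ℤ_[2])‖ ≤ 2⁻¹ := by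
  rw [norm_mul, norm_two]
  have := PadicInt.norm_le_one y
  nlinarith [norm_nonneg y]

theorem not_fifth (x : ℚ_[2]) (hx : ‖x‖ = 2⁻¹) : ¬ ∃ z : ℚ_[2], z ^ 5 = x := by
  rintro ⟨z, rfl⟩
  have hz : z ≠ 0 := by
    rintro rfl
    rw [zero_pow (by norm_num), norm_zero] at hx
    norm_num at hx
  have hv := Padic.norm_eq_zpow_neg_valuation hz
  rw [norm_pow, hv] at hx
  have h2 : ((2 : ℕ) : ℝ) = (2 : ℝ) := by norm_num
  rw [h2, ← zpow_natCast ((2:ℝ) ^ (-z.valuation)) 5, ← zpow_mul,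
    (by norm_num : (2⁻¹ : ℝ) = (2 : ℝ) ^ (-1 : ℤ))] at hx
  have heq : -z.valuation * 5 = -1 :=
    zpow_right_injective₀ (by norm_num) (by norm_num) hx
  omega

theorem key4a : ∀ x y : ZMod 4, valH (2 * x) (1 + 2 * y) = 2 := by decide
theorem key4b : ∀ x y : ZMod 4, valH (1 + 2 * x) (2 * y) = 2 := by decide
theorem key2H : valH (1 : ZMod 2) 1 = 0 := by decide
theorem key2G : valG (1 : ZMod 2) 1 = 0 := by decide
theorem key2F : valF (1 : ZMod 2) 1 = 0 := by decide

/-- From `φ₄(h) = 2`, get the unit decomposition. -/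
theorem unit_decomp {z : ℤ_[2]} (hz : phi4 z = 2) : ∃ w, z = 2 * (1 + 2 * w) := by
  have h0 : phi4 (z - 2) = 0 := by rw [map_sub, hz, map_ofNat, sub_self]
  obtain ⟨t, ht⟩ := dvd_of_phi4_eq_zero h0
  exact ⟨t, by linear_combination ht⟩

theorem even_decomp {z : ℤ_[2]} (hz : PadicInt.toZMod z = 0) : ∃ w, z = 2 * w := by
  obtain ⟨t, ht⟩ := dvd_of_toZMod_eq_zero hz
  exact ⟨t, ht⟩

end Edwards7Aux


open Edwards7Aux in
/-- For any coprime (not both even) 2-adic integers `u, v`, either `−h₇(u,v)` has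
2-adic valuation `1` (hence is not a fifth power in `ℚ₂`, so there is no 2-adic
solution `(u,v,z)` of `z⁵ = −h₇(u,v)`), or the values `f₇(u,v)`, `g₇(u,v)`, `h₇(u,v)`
are all even. -/
theorem stmt_1 (u v : ℤ_[2]) (hcop : ¬ ((2 : ℤ_[2]) ∣ u ∧ (2 : ℤ_[2]) ∣ v)) :
    (‖-(aeval ![(u : ℚ_[2]), (v : ℚ_[2])] edwardsH7)‖ = 2⁻¹ ∧
      ¬ ∃ z : ℚ_[2], z ^ 5 = -(aeval ![(u : ℚ_[2]), (v : ℚ_[2])] edwardsH7)) ∨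
    (‖aeval ![(u : ℚ_[2]), (v : ℚ_[2])] edwardsF7‖ ≤ 2⁻¹ ∧
      ‖aeval ![(u : ℚ_[2]), (v : ℚ_[2])] edwardsG7‖ ≤ 2⁻¹ ∧
      ‖aeval ![(u : ℚ_[2]), (v : ℚ_[2])] edwardsH7‖ ≤ 2⁻¹) := by
  have normCoe : ∀ z : ℤ_[2], PadicInt.toZMod z = 0 → ‖(z : ℚ_[2])‖ ≤ 2⁻¹ := by
    intro z hz
    obtain ⟨w, hw⟩ := even_decomp hz
    rw [PadicInt.padic_norm_e_of_padicInt, hw]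
    exact norm_even_le w
  have eH : aeval ![(u : ℚ_[2]), (v : ℚ_[2])] edwardsH7 = ((valH u v : ℤ_[2]) : ℚ_[2]) := by
    rw [aevalH, castH]
  have eG : aeval ![(u : ℚ_[2]), (v : ℚ_[2])] edwardsG7 = ((valG u v : ℤ_[2]) : ℚ_[2]) := by
    rw [aevalG, castG]
  have eF : aeval ![(u : ℚ_[2]), (v : ℚ_[2])] edwardsF7 = ((valF u v : ℤ_[2]) : ℚ_[2]) := by
    rw [aevalF, castF]
  rcases parity u with ⟨a, ha⟩ | ⟨a, ha⟩ <;> rcases parity v with ⟨b, hb⟩ | ⟨b, hb⟩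
  · exact absurd ⟨⟨a, ha⟩, ⟨b, hb⟩⟩ hcop
  · -- u even, v odd
    have hφ : phi4 (valH u v) = 2 := by
      rw [mapValH, ha, hb, phi4_two_mul, phi4_odd]
      exact key4a _ _
    obtain ⟨w, hw⟩ := unit_decomp hφ
    have hnorm : ‖-(aeval ![(u : ℚ_[2]), (v : ℚ_[2])] edwardsH7)‖ = 2⁻¹ := by
      rw [norm_neg, eH, PadicInt.padic_norm_e_of_padicInt, hw, norm_unit_val]
    exact Or.inl ⟨hnorm, not_fifth _ hnorm⟩
  · -- u odd, v even
    have hφ : phi4 (valH u v) = 2 := by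
      rw [mapValH, ha, hb, phi4_two_mul, phi4_odd]
      exact key4b _ _
    obtain ⟨w, hw⟩ := unit_decomp hφ
    have hnorm : ‖-(aeval ![(u : ℚ_[2]), (v : ℚ_[2])] edwardsH7)‖ = 2⁻¹ := by
      rw [norm_neg, eH, PadicInt.padic_norm_e_of_padicInt, hw, norm_unit_val]
    exact Or.inl ⟨hnorm, not_fifth _ hnorm⟩
  · -- both odd
    have hu1 : PadicInt.toZMod u = 1 := by rw [ha]; exact toZMod_odd a
    have hv1 : PadicInt.toZMod v = 1 := by rw [hb]; exact toZMod_odd b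
    refine Or.inr ⟨?_, ?_, ?_⟩
    · rw [eF]
      exact normCoe _ (by rw [mapValF, hu1, hv1]; exact key2F)
    · rw [eG]
      exact normCoe _ (by rw [mapValG, hu1, hv1]; exact key2G)
    · rw [eH]
      exact normCoe _ (by rw [mapValH, hu1, hv1]; exact key2H)
end

section
/- The only pairs of coprime integers (u, v) with v^6 + 5 u^6 ∈ {1, 3^5, 3^4, 2·3^4, 2^5·3^4, 2^6·3^4} are (u, v) = (0, 1) and (0, −1). -/
/-! Both summands are nonnegative and the sum is at most `2⁶·3⁴ = 5184`, so `|u| < 4` and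
`|v| < 5`; checking the remaining finitely many pairs leaves only `(0, ±1)`. -/

theorem abs_lt_of_even_of_pow_lt_pow {R : Type*} [Ring R] [LinearOrder R] [IsStrictOrderedRing R]
    {n : ℕ} (hn : Even n) {x b : R} (hb : 0 ≤ b) (h : x ^ n < b ^ n) : |x| < b :=
  lt_of_pow_lt_pow_left₀ n hb (hn.pow_abs x ▸ h)

theorem stmt_9_general (u v : ℤ)
    (h : v ^ 6 + 5 * u ^ 6 ∈
      ({1, 3 ^ 5, 3 ^ 4, 2 * 3 ^ 4, 2 ^ 5 * 3 ^ 4, 2 ^ 6 * 3 ^ 4} : Set ℤ)) :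
    u = 0 ∧ (v = 1 ∨ v = -1) := by
  simp only [Set.mem_insert_iff, Set.mem_singleton_iff] at h
  have hle : v ^ 6 + 5 * u ^ 6 ≤ 2 ^ 6 * 3 ^ 4 := by rcases h with h | h | h | h | h | h <;> omega
  have hu6 : 0 ≤ u ^ 6 := by positivity
  have hv6 : 0 ≤ v ^ 6 := by positivity
  have hu : |u| < 4 := abs_lt_of_even_of_pow_lt_pow (n := 6) (by decide) (by norm_num) (by omega)
  have hv : |v| < 5 := abs_lt_of_even_of_pow_lt_pow (n := 6) (by decide) (by norm_num) (by omega)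
  obtain ⟨hu₁, hu₂⟩ := abs_lt.mp hu
  obtain ⟨hv₁, hv₂⟩ := abs_lt.mp hv
  interval_cases u <;> interval_cases v <;> norm_num at h <;> norm_num

/-- The only pairs of coprime integers `(u, v)` with
`v⁶ + 5u⁶ ∈ {1, 3⁵, 3⁴, 2·3⁴, 2⁵·3⁴, 2⁶·3⁴}` are `(u, v) = (0, 1)` and `(0, −1)`. -/
theorem stmt_9 (u v : ℤ) (hcop : IsCoprime u v)
    (h : v ^ 6 + 5 * u ^ 6 ∈
      ({1, 3 ^ 5, 3 ^ 4, 2 * 3 ^ 4, 2 ^ 5 * 3 ^ 4, 2 ^ 6 * 3 ^ 4} : Set ℤ)) :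
    u = 0 ∧ (v = 1 ∨ v = -1) :=
  stmt_9_general u v h
end

section
/- The Mordell–Weil group E(Q) of the elliptic curve E: y^2 = x^3 + x^2 − 83x + 88 is isomorphic to Z/2Z. -/
/-!
Substituting `x = X + 8` turns `E` into `y² = X (X² + 25 X + 125)`, whose only visible
rational point besides `O` is the 2-torsion point `(0, 0)`. Write `X = m / e²` in lowest terms,
so that `n² = m (m² + 25 m e² + 125 e⁴)`. If `5 ∣ m` then in fact `125 ∣ m` (odd `5`-adic
valuations are excluded), and dividing out `125` amounts to translating by `(0, 0)`. The two
coprime factors are then `± a²` and `± b²`, which leaves either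
`-c² = s⁴ - 25 s² t² + 125 t⁴`, impossible modulo `8`, or a solution of
`v² = u⁴ + 25 u² e² + 125 e⁴` with `e ≠ 0`. Points of the latter kind are ruled out by Fermat
descent through the 2-isogenous quartic `V² = c⁴ - 50 c² b² + 125 b⁴`: each round trip strictly
decreases `|e|`. Hence `X = 0`, and `E(ℚ) = {O, (8, 0)}` has order `2`.
-/

/-- The elliptic curve `E : y² = x³ + x² − 83x + 88` over `ℚ`. -/
noncomputable def E10 : WeierstrassCurve ℚ :=
  { a₁ := 0, a₂ := 1, a₃ := 0, a₄ := -83, a₆ := 88 }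

theorem Int.prime_five : Prime (5 : ℤ) := Nat.prime_iff_prime_int.mp Nat.prime_five

theorem sq_ne_prime_pow_mul {R : Type*} [CommRing R] [IsDomain R] {p N : R}
    (hp : Prime p) (hN : ¬ p ∣ N) (k : ℕ) (v : R) : v ^ 2 ≠ p ^ (2 * k + 1) * N := by
  induction k generalizing v with
  | zero =>
    rintro h
    obtain ⟨w, rfl⟩ := hp.dvd_of_dvd_pow (⟨N, by rw [h]; ring⟩ : p ∣ v ^ 2)
    exact hN ⟨w ^ 2, mul_left_cancel₀ hp.ne_zero (by linear_combination -h)⟩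
  | succ k ih =>
    rintro h
    obtain ⟨w, rfl⟩ :=
      hp.dvd_of_dvd_pow (⟨p ^ (2 * k + 2) * N, by rw [h]; ring⟩ : p ∣ v ^ 2)
    exact ih w (mul_left_cancel₀ (pow_ne_zero 2 hp.ne_zero) (by linear_combination h))

theorem Prime.not_dvd_mul_add_pow {R : Type*} [CommRing R] {p x z : R} (hp : Prime p)
    (hx : ¬ p ∣ x) (hz : ¬ p ∣ z) (y : R) (k : ℕ) : ¬ p ∣ x * (p * y + z ^ k) := fun h =>
  (hp.dvd_mul.mp h).elim hx fun h =>
    hz (hp.dvd_of_dvd_pow ((dvd_add_right (dvd_mul_right _ _)).mp h))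

theorem IsCoprime.not_dvd_right_of_dvd_left {R : Type*} [CommRing R] {p a b : R}
    (h : IsCoprime a b) (hp : Prime p) (ha : p ∣ a) : ¬ p ∣ b :=
  fun hb => hp.not_isUnit (h.isUnit_of_dvd' ha hb)

theorem IsCoprime.of_isCoprime_add {R : Type*} [CommRing R] {P Q z : R}
    (h : IsCoprime (P + Q) z) (hP : P ∣ z) : IsCoprime P Q := by
  have : IsCoprime (Q + P * 1) P := by
    rw [mul_one, add_comm]; exact h.of_isCoprime_of_dvd_right hP
  exact (IsCoprime.add_mul_left_left_iff.mp this).symm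

theorem Int.sq_and_sq_of_isCoprime {a b c : ℤ} (hab : IsCoprime a b) (h : a * b = c ^ 2) :
    ∃ r s : ℤ, (a = r ^ 2 ∧ b = s ^ 2) ∨ (a = -r ^ 2 ∧ b = -s ^ 2) := by
  obtain ⟨r, rfl | rfl⟩ := Int.sq_of_isCoprime hab h <;>
    obtain ⟨s, rfl | rfl⟩ := Int.sq_of_isCoprime hab.symm (by rw [mul_comm, h])
  · exact ⟨r, s, .inl ⟨rfl, rfl⟩⟩
  · obtain rfl | rfl := mul_eq_zero.mp
      (show r * s = 0 by nlinarith [sq_nonneg c, sq_nonneg (r * s)])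
    exacts [⟨0, s, .inr ⟨by ring, rfl⟩⟩, ⟨r, 0, .inl ⟨rfl, by ring⟩⟩]
  · obtain rfl | rfl := mul_eq_zero.mp
      (show r * s = 0 by nlinarith [sq_nonneg c, sq_nonneg (r * s)])
    exacts [⟨0, s, .inl ⟨by ring, rfl⟩⟩, ⟨r, 0, .inr ⟨rfl, by ring⟩⟩]
  · exact ⟨r, s, .inr ⟨rfl, rfl⟩⟩

theorem Int.exists_add_eq_of_mul_eq_prime_pow_mul_pow_four {p P Q R : ℤ} {k : ℕ} (hp : Prime p)
    (hk : k ≠ 0) (hR : R ≠ 0) (hPQ : IsCoprime P Q) (h : P * Q = p ^ k * R ^ 4) :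
    ∃ s t : ℤ, IsCoprime s t ∧ (s * t) ^ 2 = R ^ 2 ∧
      (P + Q = s ^ 4 + p ^ k * t ^ 4 ∨ P + Q = -(s ^ 4 + p ^ k * t ^ 4)) := by
  wlog hpQ : p ∣ Q generalizing P Q
  · have hpP : p ∣ P :=
      (hp.dvd_mul.mp (h ▸ (dvd_pow_self p hk).mul_right _)).resolve_right hpQ
    rw [add_comm]
    exact this hPQ.symm (by rw [mul_comm, h]) hpP
  obtain ⟨Q', rfl⟩ : p ^ k ∣ Q :=
    ((hPQ.of_isCoprime_of_dvd_right hpQ).pow_right.symm).dvd_of_dvd_mul_left ⟨R ^ 4, h⟩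
  have hPQ' : P * Q' = R ^ 4 :=
    mul_left_cancel₀ (pow_ne_zero k hp.ne_zero) (by linear_combination h)
  have hcop : IsCoprime P Q' := hPQ.of_isCoprime_of_dvd_right (dvd_mul_left _ _)
  obtain ⟨s, hs⟩ := exists_associated_pow_of_mul_eq_pow' hcop hPQ'
  obtain ⟨t, ht⟩ := exists_associated_pow_of_mul_eq_pow' hcop.symm (by rw [mul_comm, hPQ'])
  have hst4 : 0 ≤ s ^ 4 * t ^ 4 := by positivity
  have hR4 : 0 < R ^ 4 := by positivity
  obtain ⟨rfl, rfl⟩ | ⟨rfl, rfl⟩ :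
      (P = s ^ 4 ∧ Q' = t ^ 4) ∨ (P = -s ^ 4 ∧ Q' = -t ^ 4) := by
    rcases Int.associated_iff.mp hs with hs | hs <;> rcases Int.associated_iff.mp ht with ht | ht
    · exact .inl ⟨hs.symm, ht.symm⟩
    · linarith [show s ^ 4 * t ^ 4 = -(P * Q') by rw [hs, ht]; ring]
    · linarith [show s ^ 4 * t ^ 4 = -(P * Q') by rw [hs, ht]; ring]
    · exact .inr ⟨by rw [hs, neg_neg], by rw [ht, neg_neg]⟩
  all_goals
    have hst : IsCoprime s t := by
      simpa only [IsCoprime.neg_left_iff, IsCoprime.neg_right_iff,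
        IsCoprime.pow_left_iff four_pos, IsCoprime.pow_right_iff four_pos] using hcop
    have h4 : ((s * t) ^ 2) ^ 2 = (R ^ 2) ^ 2 := by linear_combination hPQ'
    refine ⟨s, t, hst, (pow_left_inj₀ (sq_nonneg _) (sq_nonneg _) two_ne_zero).mp h4, ?_⟩
  · exact .inl (by ring)
  · exact .inr (by ring)

theorem Int.exists_pow_four_of_sq_sub_sq_eq {p T V x y k : ℤ} (hp : Prime p)
    (hxy : IsCoprime x (p * y)) (hy : y ≠ 0) (hT : T = x ^ 2 + p * y * k)
    (h : T ^ 2 - V ^ 2 = 4 * p ^ 3 * y ^ 4) :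
    ∃ s t : ℤ, IsCoprime s t ∧ (s * t) ^ 2 = y ^ 2 ∧
      (T = s ^ 4 + p ^ 3 * t ^ 4 ∨ T = -(s ^ 4 + p ^ 3 * t ^ 4)) := by
  obtain ⟨C, hC⟩ : Even (T - V) := by
    have : Even (T ^ 2 - V ^ 2) := ⟨2 * p ^ 3 * y ^ 4, by rw [h]; ring⟩
    simpa only [Int.even_sub, Int.even_pow' two_ne_zero] using this
  have hprod : C * (T - C) = p ^ 3 * y ^ 4 := by
    rw [show V = T - 2 * C by linarith] at h
    exact mul_left_cancel₀ four_ne_zero (by linear_combination h)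
  have hcop : IsCoprime C (T - C) := by
    refine IsCoprime.of_isCoprime_add (z := (p * y) ^ 4) ?_
      ⟨p * (T - C), by linear_combination -p * hprod⟩
    rw [add_sub_cancel, hT]
    exact (hxy.pow_left.add_mul_left_left k).pow_right
  simpa only [add_sub_cancel] using
    Int.exists_add_eq_of_mul_eq_prime_pow_mul_pow_four hp three_ne_zero hy hcop hprod

theorem neg_sq_ne_quartic {s t : ℤ} (hst : IsCoprime s t) (c : ℤ) :
    -c ^ 2 ≠ s ^ 4 - 25 * s ^ 2 * t ^ 2 + 125 * t ^ 4 := by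
  intro h
  have mod8 : ∀ s t c : ZMod 8, -c ^ 2 = s ^ 4 - 25 * s ^ 2 * t ^ 2 + 125 * t ^ 4 →
      4 * s = 0 ∧ 4 * t = 0 := by decide
  have h8 := mod8 s t c (by exact_mod_cast congrArg (Int.cast : ℤ → ZMod 8) h)
  have two_dvd : ∀ z : ℤ, ((4 * z : ℤ) : ZMod 8) = 0 → 2 ∣ z := fun z hz => by
    have := (ZMod.intCast_zmod_eq_zero_iff_dvd _ 8).mp hz; omega
  exact hst.not_dvd_right_of_dvd_left Int.prime_two (two_dvd s (by push_cast; exact h8.1))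
    (two_dvd t (by push_cast; exact h8.2))

theorem exists_dual_quartic_of_quartic_two_mul {x y V : ℤ} (hxy : IsCoprime x (5 * y))
    (hy : y ≠ 0) (h : V ^ 2 = x ^ 4 + 25 * x ^ 2 * (2 * y) ^ 2 + 125 * (2 * y) ^ 4) :
    ∃ b c : ℤ, IsCoprime b c ∧ b ≠ 0 ∧ (b * c) ^ 2 = y ^ 2 ∧
      x ^ 2 = c ^ 4 - 50 * c ^ 2 * b ^ 2 + 125 * b ^ 4 := by
  obtain ⟨s, t, hst, hsty, hpos | hneg⟩ := Int.exists_pow_four_of_sq_sub_sq_eq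
    (T := x ^ 2 + 50 * y ^ 2) (V := V) (k := 10 * y) Int.prime_five hxy hy (by ring)
    (by linear_combination -h)
  · have hst0 : s * t ≠ 0 := fun h0 => hy (by simpa [h0] using hsty.symm)
    exact ⟨t, s, hst.symm, right_ne_zero_of_mul hst0, by rw [mul_comm, hsty],
      by linear_combination hpos + 50 * hsty⟩
  · have : 0 < y ^ 2 := by positivity
    nlinarith [sq_nonneg x, pow_two_nonneg (s ^ 2), pow_two_nonneg (t ^ 2)]

theorem exists_dual_quartic_of_quartic {u e v : ℤ} (hue : IsCoprime u e) (he : e ≠ 0)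
    (h : v ^ 2 = u ^ 4 + 25 * u ^ 2 * e ^ 2 + 125 * e ^ 4) :
    ∃ b c V : ℤ, IsCoprime b c ∧ b ≠ 0 ∧ (b * c) ^ 2 ≤ e ^ 2 ∧
      V ^ 2 = c ^ 4 - 50 * c ^ 2 * b ^ 2 + 125 * b ^ 4 := by
  have h5u : ¬ 5 ∣ u := by
    rintro ⟨u₁, rfl⟩
    have h5e := hue.not_dvd_right_of_dvd_left Int.prime_five (dvd_mul_right 5 u₁)
    exact sq_ne_prime_pow_mul Int.prime_five
      (Int.prime_five.not_dvd_mul_add_pow Int.prime_five.not_dvd_one h5e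
        (u₁ ^ 4 + u₁ ^ 2 * e ^ 2) 4) 1 v (by linear_combination h)
  have hu5 : IsCoprime u 5 := (Int.prime_five.coprime_iff_not_dvd.mpr h5u).symm
  rcases Int.even_or_odd e with he_even | he_odd
  · obtain ⟨m, rfl⟩ := even_iff_two_dvd.mp he_even
    obtain ⟨b, c, hbc, hb, hbcm, hu⟩ := exists_dual_quartic_of_quartic_two_mul
      (hu5.mul_right (hue.of_isCoprime_of_dvd_right (dvd_mul_left m 2))) (right_ne_zero_of_mul he) h
    exact ⟨b, c, u, hbc, hb, by nlinarith [sq_nonneg m], hu⟩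
  -- for odd `e`, rescale the solution to `(2 u, 2 e, 4 v)`
  · have h2u5e : IsCoprime (2 * u) (5 * e) :=
      ((Int.isCoprime_two_left.mpr (by decide)).mul_right
        (Int.isCoprime_two_left.mpr he_odd)).mul_left (hu5.mul_right hue)
    obtain ⟨b, c, hbc, hb, hbce, hu⟩ :=
      exists_dual_quartic_of_quartic_two_mul (V := 4 * v) h2u5e he (by linear_combination 16 * h)
    exact ⟨b, c, 2 * u, hbc, hb, hbce.le, hu⟩

theorem exists_quartic_of_dual_quartic {b c V : ℤ} (hbc : IsCoprime b c) (hb : b ≠ 0)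
    (h : V ^ 2 = c ^ 4 - 50 * c ^ 2 * b ^ 2 + 125 * b ^ 4) :
    ∃ u e v : ℤ, IsCoprime u e ∧ e ≠ 0 ∧ e ^ 2 < (b * c) ^ 2 ∧
      v ^ 2 = u ^ 4 + 25 * u ^ 2 * e ^ 2 + 125 * e ^ 4 := by
  have h5c : ¬ 5 ∣ c := by
    rintro ⟨c₁, rfl⟩
    have h5b := hbc.symm.not_dvd_right_of_dvd_left Int.prime_five (dvd_mul_right 5 c₁)
    exact sq_ne_prime_pow_mul Int.prime_five
      (Int.prime_five.not_dvd_mul_add_pow Int.prime_five.not_dvd_one h5b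
        (c₁ ^ 4 - 2 * c₁ ^ 2 * b ^ 2) 4) 1 V (by linear_combination h)
  have hc5b : IsCoprime c (5 * b) :=
    (Int.prime_five.coprime_iff_not_dvd.mpr h5c).symm.mul_right hbc.symm
  obtain ⟨s, t, hst, hstb, hpos | hneg⟩ := Int.exists_pow_four_of_sq_sub_sq_eq
    (T := c ^ 2 - 25 * b ^ 2) (V := V) (k := -5 * b) Int.prime_five hc5b hb (by ring)
    (by linear_combination -h)
  · have hst0 : s * t ≠ 0 := fun h0 => hb (by simpa [h0] using hstb.symm)
    have hc : c ^ 2 = s ^ 4 + 25 * s ^ 2 * t ^ 2 + 125 * t ^ 4 := by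
      linear_combination hpos - 25 * hstb
    have hs := left_ne_zero_of_mul hst0
    have ht := right_ne_zero_of_mul hst0
    refine ⟨s, t, c, hst, ht, ?_, hc⟩
    have hs2 : 0 < s ^ 2 := by positivity
    have hc2 : 1 < c ^ 2 := by
      have : 0 < t ^ 4 := by positivity
      have : 0 ≤ s ^ 4 + 25 * s ^ 2 * t ^ 2 := by positivity
      linarith
    calc t ^ 2 ≤ s ^ 2 * t ^ 2 := le_mul_of_one_le_left (sq_nonneg t) (by linarith)
      _ < s ^ 2 * t ^ 2 * c ^ 2 := lt_mul_of_one_lt_right (by positivity) hc2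
      _ = (b * c) ^ 2 := by rw [mul_pow, ← hstb]; ring
  · exact absurd (by linear_combination -hneg + 25 * hstb) (neg_sq_ne_quartic hst c)

theorem sq_ne_quartic {u e : ℤ} (hue : IsCoprime u e) (he : e ≠ 0) (v : ℤ) :
    v ^ 2 ≠ u ^ 4 + 25 * u ^ 2 * e ^ 2 + 125 * e ^ 4 := by
  induction hn : e.natAbs using Nat.strong_induction_on generalizing u e v with
  | _ n ih =>
    intro h
    obtain ⟨b, c, V, hbc, hb, hbce, hV⟩ := exists_dual_quartic_of_quartic hue he h
    obtain ⟨u', e', v', hue', he', hlt, h'⟩ := exists_quartic_of_dual_quartic hbc hb hV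
    exact ih _ (hn ▸ Int.natAbs_lt_iff_sq_lt.mpr (hlt.trans_le hbce)) hue' he' v' rfl h'

theorem five_pow_three_dvd_of_sq_eq_cubic {m e n : ℤ} (h5e : ¬ 5 ∣ e) (h5m : 5 ∣ m)
    (h : n ^ 2 = m * (m ^ 2 + 25 * m * e ^ 2 + 125 * e ^ 4)) : 5 ^ 3 ∣ m := by
  obtain ⟨m₁, rfl⟩ := h5m
  obtain ⟨m₂, rfl⟩ : 5 ∣ m₁ := by
    by_contra h5m₁
    exact sq_ne_prime_pow_mul Int.prime_five
      (Int.prime_five.not_dvd_mul_add_pow h5m₁ h5m₁ (m₁ * e ^ 2 + e ^ 4) 2) 1 n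
      (by linear_combination h)
  obtain ⟨m₃, rfl⟩ : 5 ∣ m₂ := by
    by_contra h5m₂
    exact sq_ne_prime_pow_mul Int.prime_five
      (Int.prime_five.not_dvd_mul_add_pow h5m₂ h5e (m₂ ^ 2 + m₂ * e ^ 2) 4) 2 n
      (by linear_combination h)
  exact ⟨m₃, by ring⟩

theorem Int.eq_zero_of_sq_eq_cubic {m e n : ℤ} (hme : IsCoprime m e) (he : e ≠ 0)
    (h : n ^ 2 = m * (m ^ 2 + 25 * m * e ^ 2 + 125 * e ^ 4)) : m = 0 := by
  by_cases h5m : 5 ∣ m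
  · obtain ⟨m₃, rfl⟩ := five_pow_three_dvd_of_sq_eq_cubic
      (hme.not_dvd_right_of_dvd_left Int.prime_five h5m) h5m h
    obtain ⟨n₃, rfl⟩ : 5 ^ 3 ∣ n := (Int.pow_dvd_pow_iff two_ne_zero).mp
      ⟨m₃ * (125 * m₃ ^ 2 + 25 * m₃ * e ^ 2 + e ^ 4), by linear_combination h⟩
    have hm₃e : IsCoprime m₃ e := hme.of_isCoprime_of_dvd_left (dvd_mul_left _ _)
    obtain ⟨a, b, ⟨rfl, hb⟩ | ⟨rfl, hb⟩⟩ := Int.sq_and_sq_of_isCoprime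
      (c := n₃) ((hm₃e.pow_right (n := 4)).add_mul_left_right (25 * e ^ 2 + 125 * m₃))
      (mul_left_cancel₀ (pow_ne_zero 2 (pow_ne_zero 3 (by norm_num : (5 : ℤ) ≠ 0)))
        (by linear_combination -h))
    · have hea : IsCoprime e a :=
        (hm₃e.of_isCoprime_of_dvd_left (dvd_pow_self a two_ne_zero)).symm
      obtain rfl | ha := eq_or_ne a 0
      · ring
      · exact absurd (by linear_combination -hb) (sq_ne_quartic hea ha b)
    · have hea : IsCoprime e a :=
        (hm₃e.of_isCoprime_of_dvd_left (dvd_neg.mpr (dvd_pow_self a two_ne_zero))).symm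
      exact absurd (by linear_combination -hb) (neg_sq_ne_quartic hea b)
  · have hm125 : IsCoprime m (5 ^ 3) :=
      (Int.prime_five.coprime_iff_not_dvd.mpr h5m).symm.pow_right
    obtain ⟨a, b, ⟨rfl, hb⟩ | ⟨rfl, hb⟩⟩ := Int.sq_and_sq_of_isCoprime
      (c := n) ((hm125.mul_right (hme.pow_right (n := 4))).add_mul_left_right (m + 25 * e ^ 2))
      (by linear_combination -h)
    · exact absurd (by linear_combination -hb)
        (sq_ne_quartic (hme.of_isCoprime_of_dvd_left (dvd_pow_self a two_ne_zero)) he b)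
    · exact absurd (by linear_combination -hb) (neg_sq_ne_quartic
        (hme.of_isCoprime_of_dvd_left (dvd_neg.mpr (dvd_pow_self a two_ne_zero))) b)

theorem Rat.eq_zero_of_sq_eq_cubic {X y : ℚ} (h : y ^ 2 = X ^ 3 + 25 * X ^ 2 + 125 * X) :
    X = 0 := by
  obtain ⟨p, q, hq, hpq, rfl⟩ : ∃ p q : ℤ, 0 < q ∧ IsCoprime p q ∧ X = p / q :=
    ⟨X.num, X.den, by exact_mod_cast X.pos, Int.isCoprime_iff_gcd_eq_one.mpr X.reduced,
      (Rat.num_div_den X).symm⟩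
  have hY : (y * q ^ 2) ^ 2 = ((q * (p * (p ^ 2 + 25 * p * q + 125 * q ^ 2)) : ℤ) : ℚ) := by
    push_cast
    field_simp at h
    linear_combination (q : ℚ) * h
  obtain ⟨n, hn⟩ : ∃ n : ℤ, y * q ^ 2 = n := by
    refine ⟨(y * q ^ 2).num, ((Rat.den_eq_one_iff _).mp ?_).symm⟩
    have := Rat.den_pow (y * q ^ 2) 2
    rw [hY, Rat.den_intCast] at this
    exact (pow_eq_one_iff.mp this.symm).resolve_right two_ne_zero
  have hqn : q * (p * (p ^ 2 + 25 * p * q + 125 * q ^ 2)) = n ^ 2 := by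
    rw [hn] at hY; exact_mod_cast hY.symm
  have hcop : IsCoprime q (p * (p ^ 2 + 25 * p * q + 125 * q ^ 2)) := by
    have : IsCoprime q (p ^ 2 + q * (25 * p + 125 * q)) := hpq.symm.pow_right.add_mul_left_right _
    exact hpq.symm.mul_right (by convert this using 1; ring)
  obtain ⟨t, rfl⟩ : ∃ t, q = t ^ 2 := by
    obtain ⟨t, ht | ht⟩ := Int.sq_of_isCoprime hcop hqn
    exacts [⟨t, ht⟩, absurd hq (by rw [ht]; nlinarith [sq_nonneg t])]
  have ht : t ≠ 0 := by rintro rfl; simp at hq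
  obtain ⟨n', rfl⟩ : t ∣ n := (Int.pow_dvd_pow_iff two_ne_zero).mp ⟨_, hqn.symm⟩
  have hp := Int.eq_zero_of_sq_eq_cubic
    (hpq.of_isCoprime_of_dvd_right (dvd_pow_self t two_ne_zero)) ht (n := n')
    (mul_left_cancel₀ (pow_ne_zero 2 ht) (by linear_combination -hqn))
  simp [hp]

theorem E10_equation_iff (x y : ℚ) :
    E10.toAffine.Equation x y ↔ y ^ 2 = x ^ 3 + x ^ 2 - 83 * x + 88 := by
  rw [WeierstrassCurve.Affine.equation_iff]
  simp only [E10]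
  constructor <;> intro h <;> linear_combination h

theorem E10_nonsingular_eight_zero : E10.toAffine.Nonsingular 8 0 := by
  rw [WeierstrassCurve.Affine.nonsingular_iff', E10_equation_iff]
  simp only [E10]
  norm_num

theorem E10_point_eq_zero_or_eq (P : E10.toAffine.Point) :
    P = 0 ∨ P = .some 8 0 E10_nonsingular_eight_zero := by
  rcases P with _ | ⟨x, y, h⟩
  · exact .inl rfl
  · have hxy := (E10_equation_iff x y).mp h.1
    have hx : x - 8 = 0 := Rat.eq_zero_of_sq_eq_cubic (y := y) (by linear_combination hxy)
    obtain rfl : x = 8 := by linarith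
    obtain rfl : y = 0 := pow_eq_zero_iff two_ne_zero |>.mp (by linear_combination hxy)
    exact .inr rfl

/-- The Mordell–Weil group `E(ℚ)` of `E : y² = x³ + x² − 83x + 88` is isomorphic to `ℤ/2ℤ`. -/
theorem stmt_10 : Nonempty (E10.toAffine.Point ≃+ ZMod 2) := by
  have hcard : Nat.card E10.toAffine.Point = 2 :=
    Nat.card_eq_two_iff.mpr ⟨0, _, (WeierstrassCurve.Affine.Point.some_ne_zero _).symm,
      Set.eq_univ_of_forall fun P => E10_point_eq_zero_or_eq P⟩
  have := isAddCyclic_of_prime_card hcard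
  exact ⟨addEquivOfAddCyclicCardEq (hcard.trans (Nat.card_zmod 2).symm)⟩
end

section
/- The only rational points on the genus 1 curve 5 Y^2 = X^4 − 10 X^2 + 5 are (X, Y) = (0, 1) and (0, −1). -/
/-!
Write `X = p / q` in lowest terms. Then `w = 5 Y q²` is a rational number whose square is the
integer `5 (p⁴ - 10 p² q² + 5 q⁴)`, so `w` is an integer; this forces `p = 5 u`, `w = 5 r` and
`r² = q⁴ - 50 q² u² + 125 u⁴ = (q² - 25 u²)² - 500 u⁴` with `q` prime to `5 u`. We show `u = 0`
by infinite descent. A congruence mod 16 makes `u` even; then `(q² - 25 u² ∓ r) / 2` are coprime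
integers with product `125 u⁴`, and a congruence mod 8 makes them positive, so they are `m⁴` and
`125 n⁴`, whence `q² = m⁴ + 25 m² n² + 125 n⁴`. For odd `n`, factoring
`(2 m² + 25 n²)² - (2 q)² = 125 n⁴` in the same way leads to an impossible congruence mod 16.
For `n = 2 w`, factoring `(m² + 50 w²)² - q² = 500 w⁴` gives `m² = c⁴ - 50 c² d² + 125 d⁴`
with `0 < |d| < |u|`: a smaller solution of the same shape.
-/

theorem Rat.exists_int_eq_of_pow_eq_int {x : ℚ} {n : ℤ} {k : ℕ} (hk : k ≠ 0) (h : x ^ k = n) :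
    ∃ m : ℤ, x = m := by
  have hden : x.den ^ k = 1 := by rw [← Rat.den_pow, h, Rat.den_intCast]
  exact ⟨x.num, ((Rat.den_eq_one_iff x).1 ((Nat.pow_eq_one.1 hden).resolve_right hk)).symm⟩

theorem IsCoprime.of_add_mul {R : Type*} [CommRing R] {a b : R}
    (h : IsCoprime (a + b) (a * b)) : IsCoprime a b := by
  have hba : IsCoprime (b + a * 1) a := by simpa [add_comm] using h.of_mul_right_left
  exact (IsCoprime.add_mul_left_left_iff.1 hba).symm

theorem IsCoprime.sq_add_mul_mul_sq {R : Type*} [CommRing R] {x s t : R} (k : R) (m n : ℕ)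
    (hxt : IsCoprime x t) (hxs : IsCoprime x s) :
    IsCoprime (x ^ 2 + s * k * t ^ 2) (s ^ m * t ^ n) := by
  have ht : IsCoprime (x ^ 2 + s * k * t ^ 2) t := by
    rw [show x ^ 2 + s * k * t ^ 2 = x ^ 2 + s * k * t * t by ring,
      IsCoprime.add_mul_right_left_iff]
    exact hxt.pow_left
  have hs : IsCoprime (x ^ 2 + s * k * t ^ 2) s := by
    rw [show x ^ 2 + s * k * t ^ 2 = x ^ 2 + k * t ^ 2 * s by ring,
      IsCoprime.add_mul_right_left_iff]
    exact hxs.pow_left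
  exact hs.pow_right.mul_right ht.pow_right

theorem Int.exists_eq_pow_of_mul_eq_pow_of_even {a b c : ℤ} {k : ℕ} (hk : Even k)
    (hab : IsCoprime a b) (ha : 0 < a) (h : a * b = c ^ k) : ∃ d, a = d ^ k := by
  obtain ⟨d, hd⟩ := exists_associated_pow_of_mul_eq_pow' hab h
  rcases Int.associated_iff.1 hd with hd | hd
  · exact ⟨d, hd.symm⟩
  · linarith [hk.pow_nonneg d]

theorem Int.exists_add_eq_mul_eq_of_sq_sub_sq {S r N : ℤ} (h : S ^ 2 - r ^ 2 = 4 * N) :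
    ∃ a b, a + b = S ∧ a * b = N := by
  have hSr : Even (S - r) := by
    have : Even (S ^ 2 - r ^ 2) := ⟨2 * N, by rw [h]; ring⟩
    simpa [Int.even_sub, Int.even_pow] using this
  obtain ⟨a, ha⟩ := hSr
  refine ⟨a, S - a, by ring, mul_left_cancel₀ (four_ne_zero (α := ℤ)) ?_⟩
  linear_combination (2 * a - S - r) * ha + h

theorem exists_pow_four_of_mul_eq {a b t : ℤ} (hab : IsCoprime a b) (ha : 0 < a) (hb : 0 < b)
    (h : a * b = 125 * t ^ 4) :
    ∃ c d, IsCoprime c d ∧ IsCoprime c 5 ∧ c ^ 2 * d ^ 2 = t ^ 2 ∧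
      a + b = c ^ 4 + 125 * d ^ 4 := by
  have h5 : Prime (5 : ℤ) := Int.prime_iff_natAbs_prime.2 (by norm_num)
  wlog ha5 : IsCoprime a 5 generalizing a b
  · have h5a : (5 : ℤ) ∣ a := by
      by_contra h5a
      exact ha5 (h5.coprime_iff_not_dvd.2 h5a).symm
    have hb5 : IsCoprime b 5 := by
      refine (h5.coprime_iff_not_dvd.2 fun h5b => ?_).symm
      exact h5.not_isUnit (hab.isUnit_of_dvd' h5a h5b)
    simpa [add_comm] using this hab.symm hb ha (by rw [mul_comm, h]) hb5
  obtain ⟨b', rfl⟩ : (125 : ℤ) ∣ b := by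
    have h125 : IsCoprime (125 : ℤ) a := by simpa using ha5.symm.pow_left (m := 3)
    exact h125.dvd_of_dvd_mul_left ⟨t ^ 4, h⟩
  have hb' : a * b' = t ^ 4 :=
    mul_left_cancel₀ (by norm_num : (125 : ℤ) ≠ 0) (by linear_combination h)
  have hab' : IsCoprime a b' := hab.of_mul_right_right
  obtain ⟨c, rfl⟩ := Int.exists_eq_pow_of_mul_eq_pow_of_even (k := 4) (by decide) hab' ha hb'
  obtain ⟨d, rfl⟩ := Int.exists_eq_pow_of_mul_eq_pow_of_even (k := 4) (by decide) hab'.symm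
    (by linarith) (by rw [mul_comm, hb'])
  refine ⟨c, d, (IsCoprime.pow_iff (by decide) (by decide)).1 hab',
    (IsCoprime.pow_left_iff (by decide)).1 ha5, ?_, rfl⟩
  refine (pow_left_inj₀ (by positivity) (by positivity) two_ne_zero).1 ?_
  linear_combination hb'

theorem exists_pow_four_of_add_eq_of_mul_eq {x t k a b : ℤ} (hxt : IsCoprime x t)
    (hx5 : IsCoprime x 5) (ht : t ≠ 0) (hsum : a + b = x ^ 2 + 5 * k * t ^ 2)
    (hprod : a * b = 125 * t ^ 4) :
    ∃ c d, IsCoprime c d ∧ IsCoprime c 5 ∧ c ^ 2 * d ^ 2 = t ^ 2 ∧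
      (a + b = c ^ 4 + 125 * d ^ 4 ∨ a + b = -(c ^ 4 + 125 * d ^ 4)) := by
  have hab : IsCoprime a b := by
    refine IsCoprime.of_add_mul ?_
    rw [hsum, hprod, show (125 : ℤ) = 5 ^ 3 by norm_num]
    exact hxt.sq_add_mul_mul_sq k 3 4 hx5
  rcases pos_and_pos_or_neg_and_neg_of_mul_pos (by rw [hprod]; positivity : 0 < a * b)
    with ⟨ha, hb⟩ | ⟨ha, hb⟩
  · obtain ⟨c, d, hcd, hc5, hcdt, hab⟩ := exists_pow_four_of_mul_eq hab ha hb hprod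
    exact ⟨c, d, hcd, hc5, hcdt, .inl hab⟩
  · obtain ⟨c, d, hcd, hc5, hcdt, hab⟩ :=
      exists_pow_four_of_mul_eq hab.neg_neg (neg_pos.2 ha) (neg_pos.2 hb)
        (by rw [neg_mul_neg, hprod])
    exact ⟨c, d, hcd, hc5, hcdt, .inr (by linear_combination -hab)⟩

theorem sq_ne_quartic_of_odd {q r u : ℤ} (hu : Odd u) :
    r ^ 2 ≠ q ^ 4 - 50 * q ^ 2 * u ^ 2 + 125 * u ^ 4 := by
  obtain ⟨u, rfl⟩ := hu
  intro h
  have h16 := congrArg (Int.cast : ℤ → ZMod 16) h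
  push_cast at h16
  exact (by decide : ∀ r q u : ZMod 16,
    r ^ 2 ≠ q ^ 4 - 50 * q ^ 2 * (2 * u + 1) ^ 2 + 125 * (2 * u + 1) ^ 4) _ _ _ h16

theorem sq_sub_ne_neg_of_odd_of_even {q u m n : ℤ} (hq : Odd q) (hu : Even u) :
    q ^ 2 - 25 * u ^ 2 ≠ -(m ^ 4 + 125 * n ^ 4) := by
  obtain ⟨q, rfl⟩ := hq
  obtain ⟨u, rfl⟩ := hu
  intro h
  have h8 := congrArg (Int.cast : ℤ → ZMod 8) h
  push_cast at h8
  exact (by decide : ∀ q u m n : ZMod 8,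
    (2 * q + 1) ^ 2 - 25 * (u + u) ^ 2 ≠ -(m ^ 4 + 125 * n ^ 4)) _ _ _ _ h8

theorem four_mul_sq_ne_quartic_of_odd {m c d : ℤ} (hc : Odd c) (hd : Odd d) :
    4 * m ^ 2 ≠ c ^ 4 - 50 * c ^ 2 * d ^ 2 + 125 * d ^ 4 := by
  obtain ⟨c, rfl⟩ := hc
  obtain ⟨d, rfl⟩ := hd
  intro h
  have h16 := congrArg (Int.cast : ℤ → ZMod 16) h
  push_cast at h16
  exact (by decide : ∀ m c d : ZMod 16, 4 * m ^ 2 ≠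
    (2 * c + 1) ^ 4 - 50 * (2 * c + 1) ^ 2 * (2 * d + 1) ^ 2 + 125 * (2 * d + 1) ^ 4) _ _ _ h16

theorem sq_ne_of_isCoprime_of_odd {q m n : ℤ} (hmn : IsCoprime m n) (hm5 : IsCoprime m 5)
    (hn : Odd n) :
    q ^ 2 ≠ m ^ 4 + 25 * m ^ 2 * n ^ 2 + 125 * n ^ 4 := by
  intro hq
  have hn0 : n ≠ 0 := by rintro rfl; simp at hn
  obtain ⟨c, d, -, -, hcdn, hsum⟩ := exists_pow_four_of_add_eq_of_mul_eq (k := 10)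
    (a := 2 * m ^ 2 + 25 * n ^ 2 - 2 * q) (b := 2 * m ^ 2 + 25 * n ^ 2 + 2 * q)
    ((Int.isCoprime_two_left.2 hn).mul_left hmn) ((by norm_num : IsCoprime (2 : ℤ) 5).mul_left hm5)
    hn0 (by ring) (by linear_combination (-4) * hq)
  have hsum' : (2 * m) ^ 2 + 50 * n ^ 2 = c ^ 4 + 125 * d ^ 4 := by
    rcases hsum with hsum | hsum
    · linear_combination hsum
    · have : 0 < n ^ 2 := by positivity
      have : 0 ≤ c ^ 4 + 125 * d ^ 4 := by positivity
      linarith [sq_nonneg m]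
  have hcd : Odd c ∧ Odd d := by
    rw [← Int.odd_mul, ← Int.odd_pow' two_ne_zero, mul_pow, hcdn]
    exact hn.pow
  exact four_mul_sq_ne_quartic_of_odd (m := m) hcd.1 hcd.2 (by linear_combination hsum' + 50 * hcdn)

theorem exists_smaller_of_isCoprime_of_even {q m n : ℤ} (hmn : IsCoprime m n) (hm5 : IsCoprime m 5)
    (hn : Even n) (hn0 : n ≠ 0) (hq : q ^ 2 = m ^ 4 + 25 * m ^ 2 * n ^ 2 + 125 * n ^ 4) :
    ∃ c d, IsCoprime c d ∧ IsCoprime c 5 ∧ m ^ 2 = c ^ 4 - 50 * c ^ 2 * d ^ 2 + 125 * d ^ 4 ∧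
      d ≠ 0 ∧ d ^ 2 < n ^ 2 := by
  obtain ⟨w, rfl⟩ := hn
  have hw0 : w ≠ 0 := by rintro rfl; simp at hn0
  have hmw : IsCoprime m w := by
    rw [← two_mul] at hmn
    exact hmn.of_mul_right_right
  obtain ⟨a, b, hsum, hprod⟩ := Int.exists_add_eq_mul_eq_of_sq_sub_sq (S := m ^ 2 + 50 * w ^ 2)
    (r := q) (N := 125 * w ^ 4) (by linear_combination -hq)
  obtain ⟨c, d, hcd, hc5, hcdw, hsum'⟩ :=
    exists_pow_four_of_add_eq_of_mul_eq (k := 10) hmw hm5 hw0 (by rw [hsum]; ring) hprod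
  have hsum'' : m ^ 2 + 50 * w ^ 2 = c ^ 4 + 125 * d ^ 4 := by
    rcases hsum' with h | h
    · rwa [← hsum]
    · have : 0 < w ^ 2 := by positivity
      have : 0 ≤ c ^ 4 + 125 * d ^ 4 := by positivity
      linarith [sq_nonneg m]
  have hd0 : d ≠ 0 := by rintro rfl; exact hw0 (by simpa using hcdw.symm)
  have hc0 : c ≠ 0 := by rintro rfl; exact hw0 (by simpa using hcdw.symm)
  have hdw : d ^ 2 ≤ w ^ 2 :=
    hcdw ▸ le_mul_of_one_le_left (sq_nonneg d) ((one_le_sq_iff_one_le_abs c).2 (Int.one_le_abs hc0))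
  have : 0 < w ^ 2 := by positivity
  refine ⟨c, d, hcd, hc5, by linear_combination hsum'' + 50 * hcdw, hd0, ?_⟩
  linarith

theorem exists_pow_four_of_sq_eq_quartic {q u r : ℤ} (hqu : IsCoprime q u) (hq5 : IsCoprime q 5)
    (hu : u ≠ 0) (h : r ^ 2 = q ^ 4 - 50 * q ^ 2 * u ^ 2 + 125 * u ^ 4) :
    ∃ m n, IsCoprime m n ∧ IsCoprime m 5 ∧ m ^ 2 * n ^ 2 = u ^ 2 ∧
      q ^ 2 = m ^ 4 + 25 * m ^ 2 * n ^ 2 + 125 * n ^ 4 := by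
  have hu2 : Even u := Int.not_odd_iff_even.1 fun hu2 => sq_ne_quartic_of_odd hu2 h
  have hq2 : Odd q := Int.isCoprime_two_right.1 (hqu.of_isCoprime_of_dvd_right hu2.two_dvd)
  obtain ⟨a, b, hsum, hprod⟩ := Int.exists_add_eq_mul_eq_of_sq_sub_sq (S := q ^ 2 - 25 * u ^ 2)
    (r := r) (N := 125 * u ^ 4) (by linear_combination -h)
  obtain ⟨m, n, hmn, hm5, hmnu, hsum'⟩ :=
    exists_pow_four_of_add_eq_of_mul_eq (k := -5) hqu hq5 hu (by rw [hsum]; ring) hprod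
  refine ⟨m, n, hmn, hm5, hmnu, ?_⟩
  rcases hsum' with hsum' | hsum'
  · linear_combination hsum' - hsum - 25 * hmnu
  · exact absurd (hsum ▸ hsum') (sq_sub_ne_neg_of_odd_of_even hq2 hu2)

theorem exists_smaller_of_sq_eq_quartic {q u r : ℤ} (hqu : IsCoprime q u) (hq5 : IsCoprime q 5)
    (hu : u ≠ 0) (h : r ^ 2 = q ^ 4 - 50 * q ^ 2 * u ^ 2 + 125 * u ^ 4) :
    ∃ c d r', IsCoprime c d ∧ IsCoprime c 5 ∧
      r' ^ 2 = c ^ 4 - 50 * c ^ 2 * d ^ 2 + 125 * d ^ 4 ∧ d ≠ 0 ∧ d ^ 2 < u ^ 2 := by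
  obtain ⟨m, n, hmn, hm5, hmnu, hq⟩ := exists_pow_four_of_sq_eq_quartic hqu hq5 hu h
  have hn0 : n ≠ 0 := by rintro rfl; exact hu (by simpa using hmnu.symm)
  have hm0 : m ≠ 0 := by rintro rfl; exact hu (by simpa using hmnu.symm)
  rcases Int.even_or_odd n with hn | hn
  · obtain ⟨c, d, hcd, hc5, hm, hd0, hdn⟩ := exists_smaller_of_isCoprime_of_even hmn hm5 hn hn0 hq
    have hnu : n ^ 2 ≤ u ^ 2 :=
      hmnu ▸ le_mul_of_one_le_left (sq_nonneg n)
        ((one_le_sq_iff_one_le_abs m).2 (Int.one_le_abs hm0))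
    exact ⟨c, d, m, hcd, hc5, hm, hd0, hdn.trans_le hnu⟩
  · exact absurd hq (sq_ne_of_isCoprime_of_odd hmn hm5 hn)

theorem eq_zero_of_sq_eq_quartic {q u r : ℤ} (hqu : IsCoprime q u) (hq5 : IsCoprime q 5)
    (h : r ^ 2 = q ^ 4 - 50 * q ^ 2 * u ^ 2 + 125 * u ^ 4) : u = 0 := by
  induction hN : u.natAbs using Nat.strong_induction_on generalizing q u r with
  | _ N ih =>
    by_contra hu
    obtain ⟨c, d, r', hcd, hc5, h', hd0, hdu⟩ := exists_smaller_of_sq_eq_quartic hqu hq5 hu h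
    exact hd0 (ih _ (hN ▸ Int.natAbs_lt_iff_sq_lt.2 hdu) hcd hc5 h' rfl)

theorem eq_zero_of_sq_eq_five_mul {p q w : ℤ} (hpq : IsCoprime p q)
    (h : w ^ 2 = 5 * (p ^ 4 - 10 * p ^ 2 * q ^ 2 + 5 * q ^ 4)) : p = 0 := by
  have h5 : Prime (5 : ℤ) := Int.prime_iff_natAbs_prime.2 (by norm_num)
  obtain ⟨r, rfl⟩ : (5 : ℤ) ∣ w := h5.dvd_of_dvd_pow (n := 2) ⟨_, h⟩
  have hr : 5 * r ^ 2 = p ^ 4 - 10 * p ^ 2 * q ^ 2 + 5 * q ^ 4 :=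
    mul_left_cancel₀ (by norm_num : (5 : ℤ) ≠ 0) (by linear_combination h)
  obtain ⟨u, rfl⟩ : (5 : ℤ) ∣ p :=
    h5.dvd_of_dvd_pow (n := 4) ⟨r ^ 2 + 2 * p ^ 2 * q ^ 2 - q ^ 4, by linear_combination -hr⟩
  have hu : r ^ 2 = q ^ 4 - 50 * q ^ 2 * u ^ 2 + 125 * u ^ 4 :=
    mul_left_cancel₀ (by norm_num : (5 : ℤ) ≠ 0) (by linear_combination hr)
  rw [eq_zero_of_sq_eq_quartic hpq.symm.of_mul_right_right hpq.symm.of_mul_right_left hu, mul_zero]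

/-- The only rational points on the genus 1 curve `5Y² = X⁴ − 10X² + 5` are
`(X, Y) = (0, 1)` and `(0, −1)`. -/
theorem stmt_11 (X Y : ℚ) (h : 5 * Y ^ 2 = X ^ 4 - 10 * X ^ 2 + 5) :
    X = 0 ∧ (Y = 1 ∨ Y = -1) := by
  set p := X.num
  set q : ℤ := (X.den : ℤ)
  have hpq : IsCoprime p q := Int.isCoprime_iff_gcd_eq_one.2 X.reduced
  have hw : (5 * Y * q ^ 2) ^ 2 = ((5 * (p ^ 4 - 10 * p ^ 2 * q ^ 2 + 5 * q ^ 4) : ℤ) : ℚ) := by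
    push_cast
    rw [← Rat.mul_den_eq_num]
    linear_combination 5 * (q : ℚ) ^ 4 * h
  obtain ⟨w, hw'⟩ := Rat.exists_int_eq_of_pow_eq_int two_ne_zero hw
  have hp : p = 0 := eq_zero_of_sq_eq_five_mul hpq (w := w) (by exact_mod_cast hw' ▸ hw)
  have hX : X = 0 := Rat.num_eq_zero.1 hp
  subst hX
  exact ⟨rfl, sq_eq_one_iff.1 (by linarith)⟩
end

section
/- Let a, b ∈ Z and suppose (a + bi)^5 = (−3 + 6i) u^2 + v^2 for some coprime integers u, v (Gaussian integer equality). Setting R = a^5 − 10a^3b^2 + 5ab^4 and I = 5a^4b − 10a^2b^3 + b^5, the identity 3(2R + I)·I = (6uv)^2 holds, i.e., 3(2R + I)I is a perfect square. -/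
/-- Let `a, b ∈ ℤ` and suppose `(a + bi)⁵ = (−3 + 6i)u² + v²` for some coprime integers
`u, v` (an equality of Gaussian integers; note `(−3+6i)u² + v² = ⟨v² − 3u², 6u²⟩`).
Setting `R = a⁵ − 10a³b² + 5ab⁴` and `I = 5a⁴b − 10a²b³ + b⁵`, the identity
`3(2R + I)·I = (6uv)²` holds; in particular `3(2R + I)I` is a perfect square. -/
theorem stmt_14 (a b u v : ℤ) (hcop : IsCoprime u v)
    (h : ((⟨a, b⟩ : GaussianInt) ^ 5 : GaussianInt)
      = ((⟨-3, 6⟩ : GaussianInt) * (⟨u, 0⟩ : GaussianInt) ^ 2 + (⟨v, 0⟩ : GaussianInt) ^ 2)) :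
    3 * (2 * (a ^ 5 - 10 * a ^ 3 * b ^ 2 + 5 * a * b ^ 4)
        + (5 * a ^ 4 * b - 10 * a ^ 2 * b ^ 3 + b ^ 5))
      * (5 * a ^ 4 * b - 10 * a ^ 2 * b ^ 3 + b ^ 5) = (6 * u * v) ^ 2 := by
  have h1 := congrArg Zsqrtd.re h
  have h2 := congrArg Zsqrtd.im h
  simp only [pow_succ, pow_zero, one_mul, Zsqrtd.re_mul, Zsqrtd.im_mul, Zsqrtd.re_add,
    Zsqrtd.im_add] at h1 h2
  ring_nf at h1 h2 ⊢
  nlinarith [h1, h2, sq_nonneg u, sq_nonneg v]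
end

section
/- For every nonzero a ∈ Z_7 and any power series I(t) = c_1 t + c_2 t^2 + c_3 t^3 + ... over Z_7 with v_7(c_1 − 13·7) ≥ 3, v_7(c_2 + 19·7) ≥ 3, v_7(c_3 + 103) ≥ 3 and v_7(c_m) ≥ −v_7(m) for all m ≥ 4, the value I(7a)/(7^2 a) is congruent to 6 modulo 7; in particular I(7a) ≠ 0, so t = 0 is the only zero of I in 7Z_7. -/
/-!
After division by `7²a` the `m`-th term of the series is `c_m 7^(m-2) a^(m-1)`. For `m ≥ 2` the
hypotheses give `‖c_m‖ ≤ 7^(m-3)` (for `m ≥ 4` because `v₇(m) ≤ m - 3`), so all these terms are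
divisible by `7`, while the `m = 1` term is `c₁/7 ≡ 13 ≡ 6`. By the ultrametric inequality the
whole sum is then `≡ 6 (mod 7)`, and in particular it is nonzero.
-/

instance : Fact (Nat.Prime 7) := ⟨by norm_num⟩

lemma padicValNat_add_three_le {p m : ℕ} (hp : 5 ≤ p) (hm : 4 ≤ m) :
    padicValNat p m + 3 ≤ m := by
  set v := padicValNat p m
  rcases Nat.eq_zero_or_pos v with hv | hv
  · omega
  have bernoulli : 1 + v * 4 ≤ 5 ^ v :=
    one_add_mul_le_pow_of_sq_nonneg (by positivity) (by positivity) (by positivity) v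
  calc v + 3 ≤ 5 ^ v := by omega
    _ ≤ p ^ v := Nat.pow_le_pow_left hp v
    _ ≤ m := Nat.le_of_dvd (by omega) pow_padicValNat_dvd

lemma IsUltrametricDist.norm_le_of_norm_add_le {S : Type*} [SeminormedAddGroup S]
    [IsUltrametricDist S] {x y : S} {C : ℝ} (hxy : ‖x + y‖ ≤ C) (hy : ‖y‖ ≤ C) : ‖x‖ ≤ C := by
  simpa using (norm_add_le_max (x + y) (-y)).trans (max_le hxy (by rwa [norm_neg]))

namespace Padic

variable {p : ℕ} [Fact p.Prime]

lemma norm_mul_pow_div_le {x a : ℚ_[p]} {m : ℕ} (hm : 1 ≤ m) (ha : a ≠ 0) (ha1 : ‖a‖ ≤ 1)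
    (hx : ‖x‖ ≤ (p : ℝ) ^ ((m : ℤ) - 3)) :
    ‖x * (p * a) ^ m / (p ^ 2 * a)‖ ≤ (p : ℝ)⁻¹ := by
  have hp : (p : ℚ_[p]) ≠ 0 := by exact_mod_cast (Fact.out : p.Prime).ne_zero
  have key : x * (p * a) ^ m / (p ^ 2 * a) = x * (p : ℚ_[p]) ^ ((m : ℤ) - 2) * a ^ (m - 1) := by
    obtain ⟨k, rfl⟩ : ∃ k, m = k + 1 := ⟨m - 1, by omega⟩
    rw [Nat.add_sub_cancel, zpow_sub₀ hp, zpow_natCast]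
    field_simp
    ring
  rw [key, norm_mul, norm_mul, norm_p_zpow, norm_pow]
  calc ‖x‖ * (p : ℝ) ^ (-((m : ℤ) - 2)) * ‖a‖ ^ (m - 1)
      ≤ (p : ℝ) ^ ((m : ℤ) - 3) * (p : ℝ) ^ (-((m : ℤ) - 2)) * 1 := by
        gcongr
        exact pow_le_one₀ (norm_nonneg a) ha1
    _ = (p : ℝ)⁻¹ := by
        rw [mul_one, ← zpow_add₀ (by exact_mod_cast (Fact.out : p.Prime).ne_zero), ← zpow_neg_one]
        ring_nf

end Padic

lemma norm_seven : ‖(7 : ℚ_[7])‖ = 7⁻¹ := by simpa using Padic.norm_p (p := 7)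

lemma norm_first_term_sub_six_le {x a : ℚ_[7]} (ha : a ≠ 0)
    (hx : ‖x - 13 * 7‖ ≤ (7 : ℝ) ^ (-3 : ℤ)) :
    ‖x * (7 * a) ^ 1 / (7 ^ 2 * a) - 6‖ ≤ 7⁻¹ := by
  have hx' : ‖(x - 13 * 7) + 7 ^ 2‖ ≤ (7 : ℝ) ^ (-2 : ℤ) := by
    refine (IsUltrametricDist.norm_add_le_max _ _).trans (max_le ?_ ?_)
    · exact hx.trans (zpow_le_zpow_right₀ (by norm_num) (by norm_num))
    · rw [norm_pow, norm_seven]; norm_num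
  have key : x * (7 * a) ^ 1 / (7 ^ 2 * a) - 6 = ((x - 13 * 7) + 7 ^ 2) / 7 := by
    field_simp
    ring
  rw [key, norm_div, norm_seven, div_inv_eq_mul]
  calc ‖(x - 13 * 7) + 7 ^ 2‖ * 7 ≤ (7 : ℝ) ^ (-2 : ℤ) * 7 := by gcongr
    _ = 7⁻¹ := by norm_num

lemma norm_coeff_le {c : ℕ → ℚ_[7]}
    (hc2 : ‖c 2 + 19 * 7‖ ≤ (7 : ℝ) ^ (-3 : ℤ))
    (hc3 : ‖c 3 + 103‖ ≤ (7 : ℝ) ^ (-3 : ℤ))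
    (hcm : ∀ m : ℕ, 4 ≤ m → ‖c m‖ ≤ (7 : ℝ) ^ (padicValNat 7 m : ℤ))
    {m : ℕ} (hm : 2 ≤ m) : ‖c m‖ ≤ (7 : ℝ) ^ ((m : ℤ) - 3) := by
  match m, hm with
  | 2, _ =>
    refine IsUltrametricDist.norm_le_of_norm_add_le
      (hc2.trans (zpow_le_zpow_right₀ (by norm_num) (by norm_num))) ?_
    simpa [norm_seven] using
      mul_le_mul_of_nonneg_right (Padic.norm_int_le_one (p := 7) 19) (by norm_num : (0 : ℝ) ≤ 7⁻¹)
  | 3, _ =>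
    refine IsUltrametricDist.norm_le_of_norm_add_le
      (hc3.trans (zpow_le_zpow_right₀ (by norm_num) (by norm_num))) ?_
    simpa using Padic.norm_int_le_one (p := 7) 103
  | n + 4, _ =>
    refine (hcm (n + 4) (by omega)).trans (zpow_le_zpow_right₀ (by norm_num) ?_)
    have := padicValNat_add_three_le (p := 7) (m := n + 4) (by norm_num) (by omega)
    omega

theorem stmt_19 (c : ℕ → ℚ_[7]) (hc0 : c 0 = 0)
    (hc1 : ‖c 1 - 13 * 7‖ ≤ (7 : ℝ) ^ (-3 : ℤ))
    (hc2 : ‖c 2 + 19 * 7‖ ≤ (7 : ℝ) ^ (-3 : ℤ))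
    (hc3 : ‖c 3 + 103‖ ≤ (7 : ℝ) ^ (-3 : ℤ))
    (hcm : ∀ m : ℕ, 4 ≤ m → ‖c m‖ ≤ (7 : ℝ) ^ (padicValNat 7 m : ℤ))
    (a : ℤ_[7]) (ha : a ≠ 0)
    (S : ℚ_[7]) (hS : HasSum (fun m : ℕ => c m * (7 * (a : ℚ_[7])) ^ m) S) :
    ‖S / (7 ^ 2 * (a : ℚ_[7])) - 6‖ ≤ (7 : ℝ)⁻¹ ∧ S ≠ 0 := by
  have ha0 : (a : ℚ_[7]) ≠ 0 := PadicInt.coe_ne_zero.mpr ha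
  have ha1 : ‖(a : ℚ_[7])‖ ≤ 1 := (PadicInt.padic_norm_e_of_padicInt a).trans_le a.norm_le_one
  have hterm : ∀ m, ‖c m * (7 * (a : ℚ_[7])) ^ m / (7 ^ 2 * a) - if m = 1 then 6 else 0‖
      ≤ (7 : ℝ)⁻¹ := by
    rintro (_ | _ | m)
    · simp [hc0]
    · exact norm_first_term_sub_six_le ha0 hc1
    · simpa using Padic.norm_mul_pow_div_le (p := 7) (by omega) ha0 ha1
        (norm_coeff_le hc2 hc3 hcm (m := m + 2) (by omega))
  have hbound : ‖S / (7 ^ 2 * (a : ℚ_[7])) - 6‖ ≤ (7 : ℝ)⁻¹ := by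
    rw [← ((hS.div_const _).sub (hasSum_ite_eq 1 (6 : ℚ_[7]))).tsum_eq]
    exact IsUltrametricDist.norm_tsum_le_of_forall_le_of_nonneg (by norm_num) hterm
  refine ⟨hbound, fun hS0 => ?_⟩
  have h6 : ‖(6 : ℚ_[7])‖ = 1 := by
    simpa using (Padic.norm_natCast_eq_one_iff (p := 7) (n := 6)).mpr (by norm_num)
  rw [hS0, zero_div, zero_sub, norm_neg, h6] at hbound
  norm_num at hbound
end
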